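/- (Contraction of the penalized iteration) Let 0 < λ < 1 and j ∈ ℕ with j ≥ 2/λ. Suppose v satisfies v(t,x,w) = 1_{t ≥ ε²t_b}[(1 − 1/j)a·e^{-(1+λ)t_b} + ∫₀^{t_b} b(s) e^{-(1+λ)(t_b−s)}ds] + 1_{t ≤ ε²t_b}[∫₀^{t/ε²} b̃(s) e^{-(1+λ)(t/ε² − s)}ds], where |a| ≤ M, |b(s)| ≤ M, |b̃(s)| ≤ M for all s. Then |v(t,x,w)| ≤ (1 − 1/j)·M. -/
import Mathlib


open Real

open MeasureTheory
lemma exp_integral_eval (c T : ℝ) (hc : 0 < c) :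
    ∫ s in (0:ℝ)..T, exp (-c * (T - s)) = (1 - exp (-c * T)) / c := by
  have h : ∀ s ∈ Set.uIcc (0:ℝ) T, HasDerivAt (fun s => exp (-c * (T - s)) / c)
      (exp (-c * (T - s))) s := by
    intro s _
    have h1 : HasDerivAt (fun s : ℝ => -c * (T - s)) c s := by
      simpa using ((hasDerivAt_id s).const_sub T).const_mul (-c)
    have := (h1.exp).div_const c
    simpa [mul_div_assoc, div_self hc.ne'] using this
  have hint : IntervalIntegrable (fun s => exp (-c * (T - s))) volume 0 T := by
    apply Continuous.intervalIntegrable; continuity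
  have := intervalIntegral.integral_eq_sub_of_hasDerivAt h hint
  simp only [neg_mul] at this ⊢
  rw [this]
  simp
  ring

lemma key_bound (lam T M : ℝ) (hl : 0 < lam) (hT : 0 ≤ T) (f : ℝ → ℝ)
    (hf : ∀ s, |f s| ≤ M)
    (hint : IntervalIntegrable (fun s => f s * exp (-(1+lam)*(T-s))) volume 0 T) :
    |∫ s in (0:ℝ)..T, f s * exp (-(1+lam)*(T-s))| ≤
      M * (1 - exp (-(1+lam)*T)) / (1+lam) := by
  have hc : (0:ℝ) < 1 + lam := by linarith
  have hgint : IntervalIntegrable (fun s => M * exp (-(1+lam)*(T-s))) volume 0 T := by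
    apply Continuous.intervalIntegrable; continuity
  have h1 : |∫ s in (0:ℝ)..T, f s * exp (-(1+lam)*(T-s))| ≤
      ∫ s in (0:ℝ)..T, |f s * exp (-(1+lam)*(T-s))| :=
    intervalIntegral.abs_integral_le_integral_abs hT
  have h2 : ∫ s in (0:ℝ)..T, |f s * exp (-(1+lam)*(T-s))| ≤
      ∫ s in (0:ℝ)..T, M * exp (-(1+lam)*(T-s)) := by
    apply intervalIntegral.integral_mono_on hT hint.abs hgint
    intro s _
    rw [abs_mul, abs_of_pos (exp_pos _)]
    exact mul_le_mul_of_nonneg_right (hf s) (exp_pos _).le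
  have h3 : ∫ s in (0:ℝ)..T, M * exp (-(1+lam)*(T-s)) =
      M * (1 - exp (-(1+lam)*T)) / (1+lam) := by
    rw [intervalIntegral.integral_const_mul, exp_integral_eval _ _ hc]
    ring
  linarith

/-- Contraction of the penalized iteration: let `0 < λ < 1` and `j ∈ ℕ` with `j ≥ 2/λ`.
If `v` is given by the mild formula
`v = 1_{t ≥ ε²t_b}[(1 − 1/j) a e^{-(1+λ)t_b} + ∫₀^{t_b} b(s)e^{-(1+λ)(t_b−s)}ds]
   + 1_{t ≤ ε²t_b} ∫₀^{t/ε²} b̃(s)e^{-(1+λ)(t/ε²−s)}ds`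
with `|a| ≤ M`, `|b| ≤ M`, `|b̃| ≤ M`, then `|v| ≤ (1 − 1/j) M`. -/
theorem penalized_iteration_contraction
    (lam : ℝ) (hlam0 : 0 < lam) (hlam1 : lam < 1)
    (j : ℕ) (hj : 2 / lam ≤ (j : ℝ))
    (ε t tb M a : ℝ) (b bt : ℝ → ℝ) (v : ℝ)
    (hε : 0 < ε) (ht : 0 ≤ t) (htb : 0 ≤ tb) (hM : 0 ≤ M)
    (ha : |a| ≤ M) (hb : ∀ s, |b s| ≤ M) (hbt : ∀ s, |bt s| ≤ M)
    (hbint : IntervalIntegrable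
      (fun s => b s * exp (-(1 + lam) * (tb - s))) MeasureTheory.volume 0 tb)
    (hbtint : IntervalIntegrable
      (fun s => bt s * exp (-(1 + lam) * (t / ε ^ 2 - s))) MeasureTheory.volume 0 (t / ε ^ 2))
    (hv : v =
      if ε ^ 2 * tb ≤ t then
        (1 - 1 / (j : ℝ)) * a * exp (-(1 + lam) * tb) +
          ∫ s in (0 : ℝ)..tb, b s * exp (-(1 + lam) * (tb - s))
      else
        ∫ s in (0 : ℝ)..t / ε ^ 2, bt s * exp (-(1 + lam) * (t / ε ^ 2 - s))) :
    |v| ≤ (1 - 1 / (j : ℝ)) * M := by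
  have hjpos : (0:ℝ) < (j : ℝ) := lt_of_lt_of_le (by positivity) hj
  have h1l : (0:ℝ) < 1 + lam := by linarith
  have hjinv : 1 / (j:ℝ) ≤ lam / 2 := by
    rw [div_le_div_iff₀ hjpos (by norm_num)]
    have := (div_le_iff₀ hlam0).mp hj
    nlinarith
  have hc : 1 ≤ (1 - 1 / (j:ℝ)) * (1 + lam) := by
    nlinarith
  have hc0 : (0:ℝ) ≤ 1 - 1 / (j:ℝ) := by linarith
  rw [hv]
  split_ifs with h
  · set E := exp (-(1 + lam) * tb) with hE
    have hE0 : 0 < E := exp_pos _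
    have hE1 : E ≤ 1 := exp_le_one_iff.mpr (by nlinarith)
    have h1 := key_bound lam tb M hlam0 htb b hb hbint
    have h2 : |(1 - 1 / (j:ℝ)) * a * E| ≤ (1 - 1 / (j:ℝ)) * M * E := by
      rw [abs_mul, abs_mul, abs_of_nonneg hc0, abs_of_pos hE0]
      exact mul_le_mul_of_nonneg_right (mul_le_mul_of_nonneg_left ha hc0) hE0.le
    have hME : 0 ≤ M * (1 - E) := mul_nonneg hM (by linarith)
    have hkey : M * (1 - E) / (1 + lam) ≤ (1 - 1 / (j:ℝ)) * (M * (1 - E)) := by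
      rw [div_le_iff₀ h1l]
      nlinarith
    calc |(1 - 1 / (j:ℝ)) * a * E + ∫ s in (0:ℝ)..tb, b s * exp (-(1+lam)*(tb-s))|
        ≤ |(1 - 1 / (j:ℝ)) * a * E| + |∫ s in (0:ℝ)..tb, b s * exp (-(1+lam)*(tb-s))| :=
          abs_add_le _ _
      _ ≤ (1 - 1 / (j:ℝ)) * M := by nlinarith
  · set T := t / ε ^ 2 with hT
    have hT0 : 0 ≤ T := by positivity
    set E := exp (-(1 + lam) * T) with hE
    have hE0 : 0 < E := exp_pos _
    have h1 := key_bound lam T M hlam0 hT0 bt hbt hbtint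
    have hE1 : E ≤ 1 := exp_le_one_iff.mpr (by nlinarith)
    have hME : 0 ≤ M * (1 - E) := mul_nonneg hM (by linarith)
    have hkey : M * (1 - E) / (1 + lam) ≤ (1 - 1 / (j:ℝ)) * (M * (1 - E)) := by
      rw [div_le_iff₀ h1l]
      nlinarith
    nlinarith [mul_nonneg (mul_nonneg hc0 hM) hE0.le]
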